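/- Let X be a real random variable whose cumulative distribution function is continuous and strictly increasing, let Y be a Gaussian random variable with mean c ∈ ℝ and variance σ² > 0, let α ∈ (0,1) and ε ∈ (0, min{α, 1 − α}), and suppose the total variation distance between the law of X and the law of Y is at most ε. Then VaR^{α−ε}(Y) ≤ VaR^α(X) ≤ VaR^{α+ε}(Y), and consequently |VaR^α(X) − VaR^α(Y)| ≤ σ · max{Φ⁻¹(α) − Φ⁻¹(α − ε), Φ⁻¹(α + ε) − Φ⁻¹(α)}, where Φ⁻¹(β) denotes VaR^β of a standard Gaussian random variable and VaR^β(Z) := inf{t ∈ ℝ : P(Z ≤ t) ≥ β}. -/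

import Mathlib

/-!
Total variation at most `ε` gives the uniform CDF bound `|F_X - F_Y| ≤ ε` (test on the sets
`Iic t`). For any Borel probability measure and `β ∈ (0,1)` the quantile is the lower adjoint of
the CDF, `VaR^β ≤ s ↔ β ≤ F(s)`, so shifting one CDF by `ε` shifts the level of the quantile by
at most `ε`. Finally `VaR^β(N(c, σ²)) = c + σ Φ⁻¹(β)` because `N(c, σ²)` is the image of `N(0, 1)`
under `x ↦ c + σ x`.
-/

open MeasureTheory ProbabilityTheory

/-- The value-at-risk at level `β` of a Borel probability measure `μ` on `ℝ` (the law of a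
real random variable): `VaR^β(μ) = inf {t : ℝ | μ(Iic t) ≥ β}`. -/
noncomputable def VaR (β : ℝ) (μ : Measure ℝ) : ℝ :=
  sInf {t : ℝ | β ≤ (μ (Set.Iic t)).toReal}

/-- The standard normal quantile function `Φ⁻¹(β)`, i.e. `VaR^β` of a standard Gaussian. -/
noncomputable def stdGaussianQuantile (β : ℝ) : ℝ :=
  VaR β (gaussianReal 0 1)

/-- Total variation distance between two measures:
`‖μ − ν‖_TV = sup {|μ(A) − ν(A)| : A measurable}`. -/
noncomputable def tvDist {Ω : Type*} [MeasurableSpace Ω] (μ ν : Measure Ω) : ℝ :=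
  ⨆ A : {A : Set Ω // MeasurableSet A}, |(μ A.1).toReal - (ν A.1).toReal|

open Filter Set

theorem StieltjesFunction.sInf_le_iff (f : StieltjesFunction ℝ) {β s : ℝ}
    (hne : ∃ t, β ≤ f t) (hlow : ∃ t, f t < β) :
    sInf {t | β ≤ f t} ≤ s ↔ β ≤ f s := by
  set S := {t | β ≤ f t}
  have hbdd : BddBelow S := by
    obtain ⟨a, ha⟩ := hlow
    refine ⟨a, fun t (ht : β ≤ f t) => le_of_not_gt fun hta => ?_⟩
    linarith [f.mono hta.le]
  have hmem : β ≤ f (sInf S) := by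
    refine ge_of_tendsto ((f.right_continuous _).mono Ioi_subset_Ici_self) ?_
    refine eventually_nhdsWithin_of_forall fun t ht => ?_
    obtain ⟨u, hu, hut⟩ := exists_lt_of_csInf_lt hne ht
    exact le_trans hu (f.mono hut.le)
  exact ⟨fun h => hmem.trans (f.mono h), fun h => csInf_le hbdd h⟩

theorem VaR_le_iff (μ : Measure ℝ) [IsProbabilityMeasure μ] {β : ℝ} (hβ : β ∈ Ioo (0 : ℝ) 1)
    (s : ℝ) : VaR β μ ≤ s ↔ β ≤ (μ (Iic s)).toReal := by
  have hcdf : ∀ t, (μ (Iic t)).toReal = cdf μ t := fun t => (cdf_eq_real μ t).symm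
  simp_rw [VaR, hcdf]
  exact (cdf μ).sInf_le_iff
    (((tendsto_cdf_atTop μ).eventually_const_lt hβ.2).exists.imp fun _ => le_of_lt)
    ((tendsto_cdf_atBot μ).eventually_lt_const hβ.1).exists

theorem VaR_le_VaR_add_of_measure_Iic_le (μ ν : Measure ℝ) [IsProbabilityMeasure μ]
    [IsProbabilityMeasure ν] {α ε : ℝ} (hα : α ∈ Ioo (0 : ℝ) 1)
    (hαε : α + ε ∈ Ioo (0 : ℝ) 1) (h : ∀ t, (ν (Iic t)).toReal ≤ (μ (Iic t)).toReal + ε) :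
    VaR α μ ≤ VaR (α + ε) ν := by
  refine (VaR_le_iff μ hα _).2 ?_
  have := (VaR_le_iff ν hαε _).1 le_rfl
  linarith [h (VaR (α + ε) ν)]

theorem VaR_map_const_add_mul (μ : Measure ℝ) [IsProbabilityMeasure μ] {β : ℝ}
    (hβ : β ∈ Ioo (0 : ℝ) 1) (c : ℝ) {σ : ℝ} (hσ : 0 < σ) :
    VaR β (μ.map fun x => c + σ * x) = c + σ * VaR β μ := by
  have hf : Measurable fun x : ℝ => c + σ * x := by fun_prop
  have := Measure.isProbabilityMeasure_map (μ := μ) hf.aemeasurable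
  have hpre : ∀ s, (fun x => c + σ * x) ⁻¹' Iic s = Iic ((s - c) / σ) := fun s => by
    ext x
    simp only [mem_preimage, mem_Iic, le_div_iff₀ hσ]
    constructor <;> intro <;> linarith
  refine eq_of_forall_ge_iff fun s => ?_
  rw [VaR_le_iff _ hβ, Measure.map_apply hf measurableSet_Iic, hpre, ← VaR_le_iff μ hβ,
    le_div_iff₀' hσ, le_sub_iff_add_le']

theorem map_const_add_mul_gaussianReal_zero_one (c σ : ℝ) :
    (gaussianReal 0 1).map (fun x => c + σ * x) = gaussianReal c ⟨σ ^ 2, sq_nonneg σ⟩ := by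
  have hcomp : (fun x : ℝ => c + σ * x) = (c + ·) ∘ (σ * ·) := rfl
  rw [hcomp, ← Measure.map_map (by fun_prop) (by fun_prop), gaussianReal_map_const_mul,
    gaussianReal_map_const_add, mul_zero, zero_add, mul_one]
  rfl

theorem VaR_gaussianReal {β : ℝ} (hβ : β ∈ Ioo (0 : ℝ) 1) (c : ℝ) {σ : ℝ} (hσ : 0 < σ) :
    VaR β (gaussianReal c ⟨σ ^ 2, sq_nonneg σ⟩) = c + σ * stdGaussianQuantile β := by
  rw [← map_const_add_mul_gaussianReal_zero_one, VaR_map_const_add_mul _ hβ c hσ]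
  rfl

theorem abs_measure_sub_le_tvDist {Ω : Type*} [MeasurableSpace Ω] (μ ν : Measure Ω)
    [IsFiniteMeasure μ] [IsFiniteMeasure ν] {A : Set Ω} (hA : MeasurableSet A) :
    |(μ A).toReal - (ν A).toReal| ≤ tvDist μ ν := by
  refine le_ciSup (f := fun B : {B : Set Ω // MeasurableSet B} =>
    |(μ B.1).toReal - (ν B.1).toReal|) ⟨μ.real univ + ν.real univ, ?_⟩ ⟨A, hA⟩
  rintro _ ⟨B, rfl⟩
  refine (abs_sub _ _).trans ?_
  simp only [← measureReal_def, abs_of_nonneg measureReal_nonneg]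
  exact add_le_add (measureReal_mono (subset_univ _)) (measureReal_mono (subset_univ _))

theorem VaR_close_of_tvDist_le_gaussian_general
    (μX : Measure ℝ) [IsProbabilityMeasure μX]
    (c σ : ℝ) (hσ : 0 < σ)
    (α ε : ℝ) (hα : α ∈ Set.Ioo (0 : ℝ) 1)
    (hε : ε ∈ Set.Ioo (0 : ℝ) (min α (1 - α)))
    (htv : tvDist μX (gaussianReal c ⟨σ ^ 2, sq_nonneg σ⟩) ≤ ε) :
    (VaR (α - ε) (gaussianReal c ⟨σ ^ 2, sq_nonneg σ⟩) ≤ VaR α μX ∧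
      VaR α μX ≤ VaR (α + ε) (gaussianReal c ⟨σ ^ 2, sq_nonneg σ⟩)) ∧
    |VaR α μX - VaR α (gaussianReal c ⟨σ ^ 2, sq_nonneg σ⟩)| ≤
      σ * max (stdGaussianQuantile α - stdGaussianQuantile (α - ε))
        (stdGaussianQuantile (α + ε) - stdGaussianQuantile α) := by
  set μY := gaussianReal c ⟨σ ^ 2, sq_nonneg σ⟩
  have : IsProbabilityMeasure μY := instIsProbabilityMeasureGaussianReal c _
  obtain ⟨hε₀, hεα⟩ := hε
  rw [lt_min_iff] at hεα
  have hα_sub : α - ε ∈ Ioo (0 : ℝ) 1 := ⟨by linarith, by linarith [hα.2]⟩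
  have hα_add : α + ε ∈ Ioo (0 : ℝ) 1 := ⟨by linarith [hα.1], by linarith⟩
  have hcdf : ∀ t, |(μX (Iic t)).toReal - (μY (Iic t)).toReal| ≤ ε := fun t =>
    (abs_measure_sub_le_tvDist μX μY measurableSet_Iic).trans htv
  have hlower : VaR (α - ε) μY ≤ VaR α μX := by
    have := VaR_le_VaR_add_of_measure_Iic_le μY μX hα_sub (by rwa [sub_add_cancel])
      fun t => by linarith [(abs_le.1 (hcdf t)).2]
    rwa [sub_add_cancel] at this
  have hupper : VaR α μX ≤ VaR (α + ε) μY :=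
    VaR_le_VaR_add_of_measure_Iic_le μX μY hα hα_add fun t => by linarith [(abs_le.1 (hcdf t)).1]
  refine ⟨⟨hlower, hupper⟩, ?_⟩
  rw [VaR_gaussianReal hα_sub c hσ] at hlower
  rw [VaR_gaussianReal hα_add c hσ] at hupper
  rw [VaR_gaussianReal hα c hσ, abs_sub_le_iff]
  constructor
  · refine le_trans ?_ (mul_le_mul_of_nonneg_left (le_max_right _ _) hσ.le)
    linarith
  · refine le_trans ?_ (mul_le_mul_of_nonneg_left (le_max_left _ _) hσ.le)
    linarith

/-- If `X` has continuous strictly increasing CDF, `Y ~ N(c, σ²)`, and the total variation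
distance between the laws of `X` and `Y` is at most `ε`, then
`VaR^{α−ε}(Y) ≤ VaR^α(X) ≤ VaR^{α+ε}(Y)` and
`|VaR^α(X) − VaR^α(Y)| ≤ σ · max{Φ⁻¹(α) − Φ⁻¹(α−ε), Φ⁻¹(α+ε) − Φ⁻¹(α)}`. -/
theorem VaR_close_of_tvDist_le_gaussian
    (μX : Measure ℝ) [IsProbabilityMeasure μX]
    (hcdf_cont : Continuous fun t => (μX (Set.Iic t)).toReal)
    (hcdf_mono : StrictMono fun t => (μX (Set.Iic t)).toReal)
    (c σ : ℝ) (hσ : 0 < σ)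
    (α ε : ℝ) (hα : α ∈ Set.Ioo (0 : ℝ) 1)
    (hε : ε ∈ Set.Ioo (0 : ℝ) (min α (1 - α)))
    (htv : tvDist μX (gaussianReal c ⟨σ ^ 2, sq_nonneg σ⟩) ≤ ε) :
    (VaR (α - ε) (gaussianReal c ⟨σ ^ 2, sq_nonneg σ⟩) ≤ VaR α μX ∧
      VaR α μX ≤ VaR (α + ε) (gaussianReal c ⟨σ ^ 2, sq_nonneg σ⟩)) ∧
    |VaR α μX - VaR α (gaussianReal c ⟨σ ^ 2, sq_nonneg σ⟩)| ≤
      σ * max (stdGaussianQuantile α - stdGaussianQuantile (α - ε))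
        (stdGaussianQuantile (α + ε) - stdGaussianQuantile α) :=
  VaR_close_of_tvDist_le_gaussian_general μX c σ hσ α ε hα hε htv
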